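/- arXiv:0808.3756 — 3 statements merged into one kernel-verified Lean document; each statement's English description precedes it below -/
import Mathlib

section
/- Let C be a code of length N over alphabet Q with minimum Hamming distance D, let x̂ ∈ Q^N be a received word, and let α ∈ [0,1]^N be a weight vector. For each codeword c define α·c = Σ_{i=1}^N α_i s_i(c) where s_i(c) = +1 if c_i = x̂_i and −1 otherwise. Then there is at most one codeword c ∈ C with α·c > N − D. -/
/-- Forney's uniqueness theorem for GMD decoding: at most one codeword `c`
in a code of minimum Hamming distance `D` satisfies `α · c > N - D`. -/
theorem gmd_uniqueness {Q : Type*} [DecidableEq Q] {N D : ℕ}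
    (C : Set (Fin N → Q))
    (hdist : ∀ c ∈ C, ∀ c' ∈ C, c ≠ c' →
      D ≤ (Finset.univ.filter (fun i => c i ≠ c' i)).card)
    (xhat : Fin N → Q) (α : Fin N → ℝ)
    (hα : ∀ i, 0 ≤ α i ∧ α i ≤ 1) :
    ∀ c ∈ C, ∀ c' ∈ C,
      ((N : ℝ) - D < ∑ i, α i * (if c i = xhat i then (1 : ℝ) else -1)) →
      ((N : ℝ) - D < ∑ i, α i * (if c' i = xhat i then (1 : ℝ) else -1)) →
      c = c' := by
  intro c hc c' hc' h1 h2
  by_contra hne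
  have hD := hdist c hc c' hc' hne
  set S := Finset.univ.filter (fun i => c i ≠ c' i) with hS
  have hcard : (Finset.univ.filter (fun i => c i = c' i)).card = N - S.card := by
    have := Finset.card_filter_add_card_filter_not
      (s := (Finset.univ : Finset (Fin N))) (p := fun i => c i = c' i)
    simp only [Finset.card_univ, Fintype.card_fin] at this
    have hSeq : (Finset.univ.filter (fun i => ¬ c i = c' i)).card = S.card := rfl
    omega
  have hSle : S.card ≤ N := by
    simpa using Finset.card_le_card (Finset.filter_subset _ (Finset.univ : Finset (Fin N)))
  have key : (∑ i, α i * (if c i = xhat i then (1:ℝ) else -1)) +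
      (∑ i, α i * (if c' i = xhat i then (1:ℝ) else -1)) ≤ 2 * ((N:ℝ) - D) := by
    rw [← Finset.sum_add_distrib]
    have hle : ∀ i ∈ (Finset.univ : Finset (Fin N)),
        α i * (if c i = xhat i then (1:ℝ) else -1) +
        α i * (if c' i = xhat i then (1:ℝ) else -1) ≤
        (if c i = c' i then (2:ℝ) else 0) := by
      intro i _
      obtain ⟨h0, hle1⟩ := hα i
      by_cases hcc : c i = c' i <;> by_cases h : c i = xhat i <;>
        by_cases h' : c' i = xhat i <;> simp_all <;>
          nlinarith [(hα i).1, (hα i).2]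
    calc (∑ i, (α i * (if c i = xhat i then (1:ℝ) else -1) +
            α i * (if c' i = xhat i then (1:ℝ) else -1)))
        ≤ ∑ i, (if c i = c' i then (2:ℝ) else 0) := Finset.sum_le_sum hle
      _ = 2 * ((Finset.univ.filter (fun i => c i = c' i)).card : ℝ) := by
          rw [← Finset.sum_filter, Finset.sum_const, nsmul_eq_mul, mul_comm]
      _ ≤ 2 * ((N:ℝ) - D) := by
          rw [hcard]
          have h1 : (D:ℝ) ≤ S.card := by exact_mod_cast hD
          have h2 : ((N - S.card : ℕ) : ℝ) = (N:ℝ) - S.card := by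
            rw [Nat.cast_sub hSle]
          rw [h2]; linarith
  linarith
end

section
/- Let N be a positive integer, D ≤ N a positive integer, ε2 > 0 with 1/ε2 an integer, α ∈ [0,1]^N, and s ∈ {−1,+1}^N. Let i_1,…,i_N be a permutation sorting α so that α_{i_1} ≤ ⋯ ≤ α_{i_N}. For 0 ≤ k < 1/ε2, define q_k ∈ {0,1}^N by q_k(i_j) = 0 if α_{i_j} ≤ k·ε2 and j ≤ D, and q_k(i_j) = 1 otherwise. If Σ_i α_i s_i > N·ε2/2 + (N − D)(1 − ε2/2), then there exists k with 0 ≤ k < 1/ε2 such that Σ_i q_k(i) s_i > N − D. -/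
/-!
Reindex along `σ`, so that the weights `β = α ∘ σ` increase, and let `A` be the first `D`
coordinates. The correlation of `q k` is the sum of the signs over `{a ∈ A | k ε < β a}` plus the
full sign sum over `Aᶜ`; if it never exceeds `#Aᶜ`, every such superlevel sum is at most
`c = #Aᶜ - ∑_{Aᶜ} t`, twice the number of `-1` signs in `Aᶜ`.

On `A`, write each weight as a staircase of grid indicators `[k ε < β a]`, giving the first
step weight `1/2`; this costs at most `ε/2` per coordinate and bounds `∑_A β t` by
`ε #A / 2 + ε c (g + 1/2)`, where `g` counts the grid points `k ε`, `1 ≤ k`, below a threshold `θ`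
separating the weights on `A` from those on `Aᶜ`. On `Aᶜ` every `-1` sign sits on a weight
`≥ θ ≥ g ε`, so `∑_{Aᶜ} β t ≤ #Aᶜ - c (1 + θ) / 2`. As `(g + 1) ε ≤ 1`, the total is at most
`ε #A / 2 + #Aᶜ`, which is the bound in the hypothesis.
-/

open Finset

section Quantization

variable {ι : Type*}

noncomputable def superlevelSum (A : Finset ι) (β t : ι → ℝ) (x : ℝ) : ℝ :=
  ∑ a ∈ A with x < β a, t a

noncomputable def gridBelow (K : ℕ) (ε b : ℝ) : ℕ :=
  #((Ico 1 K).filter fun k : ℕ => (k : ℝ) * ε < b)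

variable {K : ℕ} {ε b : ℝ}

lemma gridBelow_eq (hε : 0 < ε) (hb : b ≤ K * ε) : gridBelow K ε b = ⌈b / ε⌉₊ - 1 := by
  have hceil : ⌈b / ε⌉₊ ≤ K := Nat.ceil_le.2 ((div_le_iff₀ hε).2 hb)
  rw [gridBelow, ← Nat.card_Ico]
  congr 1
  ext k
  simp only [mem_filter, mem_Ico, ← lt_div_iff₀ hε, ← Nat.lt_ceil]
  omega

lemma gridBelow_mul_le (hε : 0 < ε) (hb₀ : 0 ≤ b) (hb : b ≤ K * ε) :
    (gridBelow K ε b : ℝ) * ε ≤ b := by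
  rw [gridBelow_eq hε hb]
  rcases Nat.eq_zero_or_pos ⌈b / ε⌉₊ with h | h
  · simpa [h] using hb₀
  · exact ((le_div_iff₀ hε).1 (Nat.lt_ceil.1 (Nat.sub_lt h one_pos)).le)

lemma le_gridBelow_add_one_mul (hε : 0 < ε) (hb : b ≤ K * ε) :
    b ≤ (gridBelow K ε b + 1) * ε := by
  rw [gridBelow_eq hε hb, ← div_le_iff₀ hε]
  exact (Nat.le_ceil _).trans (by exact_mod_cast (by omega : ⌈b / ε⌉₊ ≤ ⌈b / ε⌉₊ - 1 + 1))

lemma gridBelow_add_one_le (hK : 1 ≤ K) : gridBelow K ε b + 1 ≤ K := by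
  have := card_filter_le (Ico 1 K) fun k : ℕ => (k : ℝ) * ε < b
  rw [Nat.card_Ico] at this
  unfold gridBelow
  omega

lemma mul_sign_le_gridBelow {t : ℝ} (hε : 0 < ε) (hb₀ : 0 ≤ b) (hb : b ≤ K * ε)
    (ht : t = 1 ∨ t = -1) :
    b * t ≤ ε / 2 + ε * ((if 0 < b then t else 0) / 2 + gridBelow K ε b * t) := by
  rcases hb₀.eq_or_lt with rfl | hpos
  · have : gridBelow K ε 0 = 0 := by simp [gridBelow_eq hε hb]
    simp [this]
    positivity
  · have h₁ := gridBelow_mul_le hε hb₀ hb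
    have h₂ := le_gridBelow_add_one_mul hε hb
    rw [if_pos hpos]
    rcases ht with rfl | rfl <;> linarith

variable {A B : Finset ι} {β t : ι → ℝ}

lemma superlevelSum_eq_zero {x : ℝ} (h : ∀ a ∈ A, β a ≤ x) : superlevelSum A β t x = 0 := by
  rw [superlevelSum, filter_false_of_mem fun a ha => not_lt.2 (h a ha), sum_empty]

lemma sum_Ico_superlevelSum :
    ∑ k ∈ Ico 1 K, superlevelSum A β t (k * ε) = ∑ a ∈ A, (gridBelow K ε (β a) : ℝ) * t a := by
  simp only [superlevelSum, gridBelow, sum_filter]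
  rw [sum_comm]
  refine sum_congr rfl fun a _ => ?_
  rw [← sum_filter, sum_const, nsmul_eq_mul]

lemma sum_mul_le_superlevelSum (hε : 0 < ε) (hK : K * ε = 1) (hβ : ∀ i, 0 ≤ β i ∧ β i ≤ 1)
    (ht : ∀ i, t i = 1 ∨ t i = -1) :
    ∑ a ∈ A, β a * t a ≤ ε * #A / 2 +
      ε * (superlevelSum A β t 0 / 2 + ∑ k ∈ Ico 1 K, superlevelSum A β t (k * ε)) := by
  calc ∑ a ∈ A, β a * t a
      ≤ ∑ a ∈ A, (ε / 2 + ε * ((if 0 < β a then t a else 0) / 2 + gridBelow K ε (β a) * t a)) :=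
        sum_le_sum fun a _ => mul_sign_le_gridBelow hε (hβ a).1 (hK ▸ (hβ a).2) (ht a)
    _ = _ := by
        rw [sum_Ico_superlevelSum, superlevelSum, sum_filter]
        simp only [sum_add_distrib, ← mul_sum, ← sum_div, sum_const, nsmul_eq_mul]
        ring

lemma sum_Ico_superlevelSum_le {θ c : ℝ} (hAθ : ∀ a ∈ A, β a ≤ θ)
    (hc : ∀ k < K, superlevelSum A β t (k * ε) ≤ c) :
    ∑ k ∈ Ico 1 K, superlevelSum A β t (k * ε) ≤ gridBelow K ε θ * c := by
  rw [← sum_filter_of_ne (p := fun k : ℕ => (k : ℝ) * ε < θ) fun k _ hk => ?_, gridBelow,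
    ← nsmul_eq_mul]
  · exact sum_le_card_nsmul _ _ _ fun k hk => hc k (mem_Ico.1 (mem_filter.1 hk).1).2
  · by_contra hθk
    exact hk (superlevelSum_eq_zero fun a ha => (hAθ a ha).trans (not_lt.1 hθk))

lemma sum_mul_le_of_threshold_le {θ : ℝ} (hθB : ∀ b ∈ B, θ ≤ β b ∧ β b ≤ 1)
    (ht : ∀ i, t i = 1 ∨ t i = -1) :
    ∑ b ∈ B, β b * t b ≤ ∑ b ∈ B, t b + (1 - θ) * (#B - ∑ b ∈ B, t b) / 2 := by
  calc ∑ b ∈ B, β b * t b ≤ ∑ b ∈ B, (t b + (1 - θ) * (1 - t b) / 2) := by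
        refine sum_le_sum fun b hb => ?_
        obtain ⟨h₁, h₂⟩ := hθB b hb
        rcases ht b with h | h <;> rw [h] <;> linarith
    _ = _ := by
        simp only [sum_add_distrib, ← sum_div, ← mul_sum, sum_sub_distrib, sum_const, nsmul_eq_mul]
        ring

lemma exists_separating_threshold (hβ : ∀ i, 0 ≤ β i ∧ β i ≤ 1)
    (hAB : ∀ a ∈ A, ∀ b ∈ B, β a ≤ β b) :
    ∃ θ, 0 ≤ θ ∧ θ ≤ 1 ∧ (∀ a ∈ A, β a ≤ θ) ∧ ∀ b ∈ B, θ ≤ β b := by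
  rcases A.eq_empty_or_nonempty with rfl | hA
  · exact ⟨0, le_rfl, zero_le_one, by simp, fun b _ => (hβ b).1⟩
  · obtain ⟨a₀, ha₀, hmax⟩ := A.exists_max_image β hA
    exact ⟨β a₀, (hβ a₀).1, (hβ a₀).2, hmax, hAB a₀ ha₀⟩

theorem sum_mul_le_of_superlevelSum_le (hε : 0 < ε) (hK : K * ε = 1)
    (hβ : ∀ i, 0 ≤ β i ∧ β i ≤ 1) (ht : ∀ i, t i = 1 ∨ t i = -1)
    (hAB : ∀ a ∈ A, ∀ b ∈ B, β a ≤ β b)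
    (hlevel : ∀ k < K, superlevelSum A β t (k * ε) + ∑ b ∈ B, t b ≤ #B) :
    ∑ a ∈ A, β a * t a + ∑ b ∈ B, β b * t b ≤ ε * #A / 2 + #B := by
  obtain ⟨θ, hθ₀, hθ₁, hAθ, hθB⟩ := exists_separating_threshold hβ hAB
  have hK₁ : 1 ≤ K := Nat.one_le_iff_ne_zero.2 fun h => by simp [h] at hK
  set c : ℝ := #B - ∑ b ∈ B, t b
  have hc₀ : 0 ≤ c := by
    have := sum_le_card_nsmul B t 1 fun b _ => by rcases ht b with h | h <;> linarith
    simp only [nsmul_eq_mul, mul_one] at this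
    linarith
  have hc : ∀ k < K, superlevelSum A β t (k * ε) ≤ c := fun k hk => by linarith [hlevel k hk]
  have h₀ : superlevelSum A β t 0 ≤ c := by simpa using hc 0 hK₁
  have hA := sum_mul_le_superlevelSum (A := A) hε hK hβ ht
  have hB := sum_mul_le_of_threshold_le (fun b hb => ⟨hθB b hb, (hβ b).2⟩) ht
  have hlevels := sum_Ico_superlevelSum_le hAθ hc
  have hgθ := gridBelow_mul_le hε hθ₀ (hK ▸ hθ₁)
  have hgK : ((gridBelow K ε θ + 1 : ℕ) : ℝ) * ε ≤ 1 :=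
    hK ▸ mul_le_mul_of_nonneg_right (by exact_mod_cast gridBelow_add_one_le hK₁) hε.le
  push_cast at hgK
  linarith [mul_le_mul_of_nonneg_left h₀ hε.le, mul_le_mul_of_nonneg_left hlevels hε.le,
    mul_le_mul_of_nonneg_left hgθ hc₀, mul_le_mul_of_nonneg_left hgK hc₀]

lemma sum_erasure_mul_eq [Fintype ι] [DecidableEq ι] (A : Finset ι) (β t v : ι → ℝ) (x : ℝ)
    (hv : ∀ i, v i = if β i ≤ x ∧ i ∈ A then 0 else 1) :
    ∑ i, v i * t i = superlevelSum A β t x + ∑ i ∈ Aᶜ, t i := by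
  rw [← sum_add_sum_compl A, superlevelSum, sum_filter]
  congr 1
  · refine sum_congr rfl fun i hi => ?_
    by_cases h : β i ≤ x <;> simp [hv, h, hi]
  · exact sum_congr rfl fun i hi => by simp [hv, mem_compl.1 hi]

end Quantization

theorem quantization_theorem_general {N D : ℕ} (hDN : D ≤ N)
    (ε2 : ℝ) (hε2 : 0 < ε2) (K : ℕ) (hK : (K : ℝ) * ε2 = 1)
    (α s : Fin N → ℝ)
    (hα : ∀ i, 0 ≤ α i ∧ α i ≤ 1)
    (hs : ∀ i, s i = 1 ∨ s i = -1)
    (σ : Equiv.Perm (Fin N)) (hσ : Monotone (α ∘ σ))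
    (q : ℕ → Fin N → ℝ)
    (hq : ∀ k, ∀ j : Fin N,
      q k (σ j) = if α (σ j) ≤ (k : ℝ) * ε2 ∧ (j : ℕ) + 1 ≤ D then 0 else 1)
    (hcorr : (N : ℝ) * ε2 / 2 + ((N : ℝ) - D) * (1 - ε2 / 2) < ∑ i, α i * s i) :
    ∃ k, k < K ∧ ((N : ℝ) - D) < ∑ i, q k i * s i := by
  by_contra! hcon
  set A : Finset (Fin N) := {j | (j : ℕ) < D}
  have hcardA : #A = D := by rw [Fin.card_filter_val_lt, min_eq_right hDN]
  have hcardAc : (#Aᶜ : ℝ) = N - D := by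
    rw [card_compl, Fintype.card_fin, hcardA, Nat.cast_sub hDN]
  have hlevel :
      ∀ k < K, superlevelSum A (α ∘ σ) (s ∘ σ) (k * ε2) + ∑ j ∈ Aᶜ, (s ∘ σ) j ≤ #Aᶜ := by
    intro k hk
    have h := (Equiv.sum_comp σ fun i => q k i * s i).symm.trans <|
      sum_erasure_mul_eq A (α ∘ σ) (s ∘ σ) (fun j => q k (σ j)) (k * ε2) fun j => by simp [hq, A]
    rw [hcardAc]
    exact h ▸ hcon k hk
  have hsorted : ∀ a ∈ A, ∀ b ∈ Aᶜ, (α ∘ σ) a ≤ (α ∘ σ) b := fun a ha b hb =>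
    hσ (Fin.le_def.2 (by simp only [A, mem_compl, mem_filter_univ] at ha hb; omega))
  have key := sum_mul_le_of_superlevelSum_le hε2 hK (fun j => hα (σ j)) (fun j => hs (σ j))
    hsorted hlevel
  rw [sum_add_sum_compl, Equiv.sum_comp σ fun i => α i * s i, hcardAc, hcardA] at key
  linarith

/-- Quantization theorem (Theorem 2 of the paper): if the weighted correlation
exceeds `N·ε2/2 + (N−D)(1−ε2/2)`, then one of the at most `1/ε2` erasure
vectors `q_k` has correlation exceeding `N − D`. -/
theorem quantization_theorem {N D : ℕ} (hN : 0 < N) (hD : 0 < D) (hDN : D ≤ N)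
    (ε2 : ℝ) (hε2 : 0 < ε2) (K : ℕ) (hK : (K : ℝ) * ε2 = 1)
    (α s : Fin N → ℝ)
    (hα : ∀ i, 0 ≤ α i ∧ α i ≤ 1)
    (hs : ∀ i, s i = 1 ∨ s i = -1)
    (σ : Equiv.Perm (Fin N)) (hσ : Monotone (α ∘ σ))
    (q : ℕ → Fin N → ℝ)
    (hq : ∀ k, ∀ j : Fin N,
      q k (σ j) = if α (σ j) ≤ (k : ℝ) * ε2 ∧ (j : ℕ) + 1 ≤ D then 0 else 1)
    (hcorr : (N : ℝ) * ε2 / 2 + ((N : ℝ) - D) * (1 - ε2 / 2) < ∑ i, α i * s i) :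
    ∃ k, k < K ∧ ((N : ℝ) - D) < ∑ i, q k i * s i :=
  quantization_theorem_general hDN ε2 hε2 K hK α s hα hs σ hσ q hq hcorr
end

section
/- Let α ∈ [0,1]^N, let i_1,…,i_N sort α ascendingly, let D ≤ N, ε2 > 0 with 1/ε2 ∈ ℕ, p = ⌈α_{i_D}/ε2⌉ with α_{i_D} > 0, and define α̃ as in the rounding construction (round the D smallest weights to the nearest grid point c_j = (j−1/2)ε2, 1 ≤ j ≤ p; leave the others unchanged). Define p_k for 0 ≤ k ≤ p + (N − D): p_k = q_k for 0 ≤ k < p (the erasure vectors of the quantization theorem applied to α̃'s grid levels), and for p ≤ k ≤ p + (N−D), p_k(i) = 1 if α_i > α_{i_{k−p+D}} and 0 otherwise. With λ_0 = ε2/2, λ_k = ε2 for 1 ≤ k ≤ p−1, λ_p = α_{i_{D+1}} − (p−1/2)ε2, λ_h = α_{i_{h−p+D+1}} − α_{i_{h−p+D}} for p < h < p + (N−D), and λ_{p+(N−D)} = 1 − α_{i_N}: all λ_k ≥ 0, Σ_k λ_k = 1, and α̃ = Σ_k λ_k p_k. -/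
/-!
The coefficients are the increments `λ_k = L (k + 1) - L k` of the nondecreasing sequence
`L = 0, c_1, …, c_p, α_{i_{D+1}}, …, α_{i_N}, 1` (nondecreasing because `c_p ≤ α_{i_{D+1}}`),
so they are nonnegative and sum to `1`. At a fixed coordinate `i` the column `k ↦ p_k(i)` is a
staircase `1, …, 1, 0, …, 0` of some length `c` with `L c = α̃_i`: a small weight rounded to `c_j`
is erased by exactly the first `j` patterns, and a larger weight survives every erasure pattern
and exactly the thresholds below `α_i`. Hence `∑ λ_k p_k(i)` telescopes to `L c = α̃_i`.
-/

open Finset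

theorem sum_range_mul_ite_lt {n c : ℕ} (l : ℕ → ℝ) (hc : c ≤ n) :
    ∑ k ∈ range n, l k * (if k < c then 1 else 0) = ∑ k ∈ range c, l k := by
  rw [← sum_range_add_sum_Ico _ hc]
  have hlow : ∀ k ∈ range c, l k * (if k < c then 1 else 0) = l k := fun k hk => by
    rw [if_pos (mem_range.mp hk), mul_one]
  have hhigh : ∀ k ∈ Ico c n, l k * (if k < c then 1 else 0) = 0 := fun k hk => by
    rw [if_neg (not_lt.mpr (mem_Ico.mp hk).1), mul_zero]
  rw [sum_congr rfl hlow, sum_eq_zero hhigh, add_zero]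

theorem convex_decomposition_of_staircase {ι : Type*} {n : ℕ} {l L : ℕ → ℝ} {x : ι → ℝ}
    {v : ℕ → ι → ℝ} (hl : ∀ k ≤ n, l k = L (k + 1) - L k) (hL : Monotone L) (hL0 : L 0 = 0)
    (hLn : L (n + 1) = 1)
    (hv : ∀ i, ∃ c ≤ n + 1, (∀ k ≤ n, v k i = if k < c then 1 else 0) ∧ x i = L c) :
    (∀ k ≤ n, 0 ≤ l k) ∧ (∑ k ∈ range (n + 1), l k = 1) ∧
      ∀ i, x i = ∑ k ∈ range (n + 1), l k * v k i := by
  have hpartial : ∀ c ≤ n + 1, ∑ k ∈ range c, l k = L c := fun c hc => by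
    rw [sum_congr rfl fun k hk => hl k (by grind), sum_range_sub, hL0, sub_zero]
  refine ⟨fun k hk => (hl k hk).symm ▸ sub_nonneg.mpr (hL k.le_succ),
    by rw [hpartial _ le_rfl, hLn], fun i => ?_⟩
  obtain ⟨c, hc, hstair, hxc⟩ := hv i
  rw [hxc, sum_congr rfl fun k hk => by rw [hstair k (by grind)], sum_range_mul_ite_lt l hc,
    hpartial c hc]

theorem Monotone.exists_lt_iff_lt_and_eq {β : Type*} [LinearOrder β] {g : ℕ → β} (hg : Monotone g)
    (n : ℕ) : ∃ t ≤ n, (∀ r, g r < g n ↔ r < t) ∧ g t = g n := by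
  classical
  have hex : ∃ r, g n ≤ g r := ⟨n, le_rfl⟩
  have htn : Nat.find hex ≤ n := Nat.find_min' hex le_rfl
  refine ⟨Nat.find hex, htn, fun r => ⟨fun hr => ?_, fun hr => not_le.mp (Nat.find_min hex hr)⟩,
    le_antisymm (hg htn) (Nat.find_spec hex)⟩
  by_contra! htr
  exact hr.not_ge ((Nat.find_spec hex).trans (hg htr))

theorem nearest_grid_index_eq {ε x : ℝ} (hε : 0 < ε) {p j : ℕ} (hjp : j ≤ p)
    (hx : ((p : ℝ) - 1) * ε < x)
    (hnear : |((j : ℝ) - 1 / 2) * ε - x| ≤ |((p : ℝ) - 1 / 2) * ε - x|) : j = p := by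
  by_contra hne
  have hj : (j : ℝ) + 1 ≤ p := by exact_mod_cast (lt_of_le_of_ne hjp hne)
  have hgap : ((j : ℝ) - 1 / 2) * ε + ε ≤ ((p : ℝ) - 1 / 2) * ε := by nlinarith
  rw [abs_sub_comm, abs_of_pos (by nlinarith)] at hnear
  cases abs_cases (((p : ℝ) - 1 / 2) * ε - x) <;> nlinarith

theorem grid_le_nat_mul_iff {ε : ℝ} (hε : 0 < ε) {j k : ℕ} :
    ((j : ℝ) - 1 / 2) * ε ≤ k * ε ↔ j ≤ k := by
  rw [mul_le_mul_iff_of_pos_right hε]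
  constructor
  · intro h
    exact Nat.lt_succ_iff.mp (by exact_mod_cast (by linarith : (j : ℝ) < k + 1))
  · intro h
    linarith [(Nat.cast_le (α := ℝ)).mpr h]

/-- `sortedWeight hN α σ m` is `α_{i_{m+1}}` (indices are `0`-based), continued constantly past
`m = N - 1` so that it is monotone on all of `ℕ`. -/
def sortedWeight {N : ℕ} (hN : 0 < N) (α : Fin N → ℝ) (σ : Equiv.Perm (Fin N)) (m : ℕ) : ℝ :=
  α (σ ⟨min m (N - 1), by omega⟩)

theorem sortedWeight_of_lt {N : ℕ} (hN : 0 < N) (α : Fin N → ℝ) (σ : Equiv.Perm (Fin N)) {m : ℕ}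
    (hm : m < N) : sortedWeight hN α σ m = α (σ ⟨m, hm⟩) := by
  unfold sortedWeight
  congr 3
  omega

theorem sortedWeight_monotone {N : ℕ} (hN : 0 < N) {α : Fin N → ℝ} {σ : Equiv.Perm (Fin N)}
    (hσ : Monotone (α ∘ σ)) : Monotone (sortedWeight hN α σ) :=
  fun _ _ hab => hσ (Fin.mk_le_mk.mpr (min_le_min_right _ hab))

/-- The sequence `0, c_1, …, c_p, f D, …, f (D + n - 1), 1, 1, …`. -/
noncomputable def cumulativeWeight (ε : ℝ) (f : ℕ → ℝ) (p D n k : ℕ) : ℝ :=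
  if k = 0 then 0
  else if k ≤ p then ((k : ℝ) - 1 / 2) * ε
  else if k ≤ p + n then f (k - p + D - 1)
  else 1

section cumulativeWeight

variable {ε : ℝ} {f : ℕ → ℝ} {p D n : ℕ}

theorem cumulativeWeight_zero : cumulativeWeight ε f p D n 0 = 0 := if_pos rfl

theorem cumulativeWeight_of_le {k : ℕ} (hk0 : 0 < k) (hkp : k ≤ p) :
    cumulativeWeight ε f p D n k = ((k : ℝ) - 1 / 2) * ε := by
  rw [cumulativeWeight, if_neg hk0.ne', if_pos hkp]

theorem cumulativeWeight_of_lt {k : ℕ} (hpk : p < k) (hkn : k ≤ p + n) :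
    cumulativeWeight ε f p D n k = f (k - p + D - 1) := by
  rw [cumulativeWeight, if_neg (by omega), if_neg hpk.not_ge, if_pos hkn]

theorem cumulativeWeight_top : cumulativeWeight ε f p D n (p + n + 1) = 1 := by
  rw [cumulativeWeight, if_neg (by omega), if_neg (by omega), if_neg (by omega)]

theorem cumulativeWeight_monotone (hε : 0 < ε) (hp : 0 < p) (hn : 0 < n) (hf : Monotone f)
    (hf1 : ∀ m, f m ≤ 1) (hgrid : ((p : ℝ) - 1 / 2) * ε ≤ f D) :
    Monotone (cumulativeWeight ε f p D n) := by
  refine monotone_nat_of_le_succ fun k => ?_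
  simp only [cumulativeWeight, Nat.add_one_ne_zero, if_false]
  split_ifs with h0 <;> first
    | omega
    | exact le_rfl
    | exact hf1 _
    | exact hf (by omega)
    | (subst h0; push_cast; linarith)
    | (push_cast; nlinarith)
    | (obtain rfl : k = p := by omega
       rwa [show k + 1 - k + D - 1 = D by omega])

theorem coeff_eq_cumulativeWeight_sub {l : ℕ → ℝ} (hp : 0 < p) (hn : 0 < n) (hD : 0 < D)
    (hl0 : l 0 = ε / 2) (hlmid : ∀ k, 1 ≤ k → k ≤ p - 1 → l k = ε)
    (hlp : l p = f D - ((p : ℝ) - 1 / 2) * ε)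
    (hlh : ∀ h, p < h → h < p + n → l h = f (h - p + D) - f (h - p + D - 1))
    (hltop : l (p + n) = 1 - f (D + n - 1)) {k : ℕ} (hk : k ≤ p + n) :
    l k = cumulativeWeight ε f p D n (k + 1) - cumulativeWeight ε f p D n k := by
  obtain rfl | hk0 := Nat.eq_zero_or_pos k
  · rw [hl0, zero_add, cumulativeWeight_of_le one_pos hp, cumulativeWeight_zero]
    ring
  obtain hkp | rfl | hkp := lt_trichotomy k p
  · rw [hlmid k hk0 (by omega), cumulativeWeight_of_le (by omega) hkp,
      cumulativeWeight_of_le hk0 hkp.le]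
    push_cast
    ring
  · rw [hlp, cumulativeWeight_of_lt (by omega) (by omega), cumulativeWeight_of_le hk0 le_rfl,
      show k + 1 - k + D - 1 = D by omega]
  obtain hkn | rfl := hk.lt_or_eq
  · rw [hlh k hkp hkn, cumulativeWeight_of_lt (by omega) hkn, cumulativeWeight_of_lt hkp hk,
      show k + 1 - p + D - 1 = k - p + D by omega]
  · rw [hltop, cumulativeWeight_top, cumulativeWeight_of_lt hkp le_rfl,
      show p + n - p + D - 1 = D + n - 1 by omega]

end cumulativeWeight

section staircase

variable {ε : ℝ} {f : ℕ → ℝ} {p D n m : ℕ} {a : ℝ} {v : ℕ → ℝ}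

theorem staircase_of_rounded (hε : 0 < ε) (hf : Monotone f) (hm : m < D) {j : ℕ} (hjp : j ≤ p)
    (ha : a = ((j : ℝ) - 1 / 2) * ε)
    (hlo : ∀ k < p, v k = if a ≤ k * ε ∧ m + 1 ≤ D then 0 else 1)
    (hhi : ∀ k, p ≤ k → k ≤ p + n → v k = if f (k - p + D - 1) < f m then 1 else 0) :
    ∀ k ≤ p + n, v k = if k < j then 1 else 0 := by
  intro k hk
  obtain hkp | hkp := lt_or_ge k p
  · rw [hlo k hkp, ha]
    by_cases hjk : j ≤ k
    · rw [if_pos ⟨(grid_le_nat_mul_iff hε).mpr hjk, hm⟩, if_neg hjk.not_gt]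
    · rw [if_neg fun h => hjk ((grid_le_nat_mul_iff hε).mp h.1), if_pos (not_le.mp hjk)]
  · rw [hhi k hkp hk, if_neg (hf (by omega)).not_gt, if_neg (by omega)]

theorem staircase_of_threshold (hD : 0 < D) (hm : D ≤ m) {t : ℕ}
    (ht : ∀ r, f (D - 1 + r) < f m ↔ r < t)
    (hlo : ∀ k < p, v k = if a ≤ k * ε ∧ m + 1 ≤ D then 0 else 1)
    (hhi : ∀ k, p ≤ k → k ≤ p + n → v k = if f (k - p + D - 1) < f m then 1 else 0) :
    ∀ k ≤ p + n, v k = if k < p + t then 1 else 0 := by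
  intro k hk
  obtain hkp | hkp := lt_or_ge k p
  · rw [hlo k hkp, if_neg fun h => by omega, if_pos (by omega)]
  · rw [hhi k hkp hk, show k - p + D - 1 = D - 1 + (k - p) by omega]
    exact if_congr ((ht _).trans (by omega)) rfl rfl

theorem exists_staircase (hε : 0 < ε) (hf : Monotone f) (hp : 0 < p) (hD : 0 < D)
    (hm : m < D + n) (hpD : ((p : ℝ) - 1) * ε < f (D - 1))
    (hround : f m ≤ f (D - 1) → ∃ j : ℕ, 1 ≤ j ∧ j ≤ p ∧ a = ((j : ℝ) - 1 / 2) * ε ∧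
      ∀ j' : ℕ, 1 ≤ j' → j' ≤ p →
        |((j : ℝ) - 1 / 2) * ε - f m| ≤ |((j' : ℝ) - 1 / 2) * ε - f m|)
    (hkeep : f (D - 1) < f m → a = f m)
    (hlo : ∀ k < p, v k = if a ≤ k * ε ∧ m + 1 ≤ D then 0 else 1)
    (hhi : ∀ k, p ≤ k → k ≤ p + n → v k = if f (k - p + D - 1) < f m then 1 else 0) :
    ∃ c ≤ p + n + 1, (∀ k ≤ p + n, v k = if k < c then 1 else 0) ∧
      a = cumulativeWeight ε f p D n c := by
  by_cases hmD : m < D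
  · obtain ⟨j, hj1, hjp, ha, -⟩ := hround (hf (by omega))
    exact ⟨j, by omega, staircase_of_rounded hε hf hmD hjp ha hlo hhi,
      ha.trans (cumulativeWeight_of_le hj1 hjp).symm⟩
  have hg : Monotone fun r => f (D - 1 + r) := fun _ _ hrs => hf (by omega)
  obtain ⟨t, htm, ht, hteq⟩ := hg.exists_lt_iff_lt_and_eq (m - (D - 1))
  simp only [Nat.add_sub_cancel' (show D - 1 ≤ m by omega)] at ht hteq
  refine ⟨p + t, by omega, staircase_of_threshold hD (not_lt.mp hmD) ht hlo hhi, ?_⟩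
  obtain rfl | ht0 := Nat.eq_zero_or_pos t
  · rw [add_zero] at hteq
    obtain ⟨j, -, hjp, ha, hnear⟩ := hround hteq.ge
    -- `f m = α_{i_D}` exceeds `(p - 1) ε`, so its nearest grid point is `c_p`.
    obtain rfl : j = p := nearest_grid_index_eq hε hjp (hteq ▸ hpD) (hnear p hp le_rfl)
    rw [ha, add_zero, cumulativeWeight_of_le hp le_rfl]
  · rw [hkeep (by simpa using (ht 0).mpr ht0), cumulativeWeight_of_lt (by omega) (by omega),
      show p + t - p + D - 1 = D - 1 + t by omega, hteq]

end staircase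

/-- Explicit convex decomposition of the rounded weight vector `α̃` as a convex
combination of the binary vectors `p_0, …, p_{p+(N−D)}` (the quantized erasure
patterns followed by threshold indicators of the sorted weights). -/
theorem rounded_weights_convex_decomposition {N D : ℕ}
    (hD : 0 < D) (hDN : D < N)
    (ε2 : ℝ) (hε2 : 0 < ε2)
    (α αt : Fin N → ℝ)
    (hα : ∀ i, 0 ≤ α i ∧ α i ≤ 1)
    (σ : Equiv.Perm (Fin N)) (hσ : Monotone (α ∘ σ))
    (αD : ℝ) (hαD : αD = α (σ ⟨D - 1, by omega⟩)) (hαDpos : 0 < αD)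
    (p : ℕ) (hp : p = ⌈αD / ε2⌉₊)
    (hgrid : ((p : ℝ) - 1 / 2) * ε2 ≤ α (σ ⟨D, by omega⟩))
    -- `α̃` rounds the `D` smallest weights to the nearest grid point
    -- `c_j = (j − 1/2)·ε2`, `1 ≤ j ≤ p`, and leaves the others unchanged:
    (hαt : ∀ i, (α i ≤ αD →
        ∃ j : ℕ, 1 ≤ j ∧ j ≤ p ∧ αt i = ((j : ℝ) - 1 / 2) * ε2 ∧
          ∀ j' : ℕ, 1 ≤ j' → j' ≤ p →
            |((j : ℝ) - 1 / 2) * ε2 - α i| ≤ |((j' : ℝ) - 1 / 2) * ε2 - α i|)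
      ∧ (αD < α i → αt i = α i))
    -- the binary vectors `p_k`:
    (pk : ℕ → Fin N → ℝ)
    (hpk_lo : ∀ k, k < p → ∀ j : Fin N,
      pk k (σ j) = if αt (σ j) ≤ (k : ℝ) * ε2 ∧ (j : ℕ) + 1 ≤ D then 0 else 1)
    (hpk_hi : ∀ (k : ℕ) (_hk1 : p ≤ k) (_hk2 : k ≤ p + (N - D)) (i : Fin N),
      pk k i = if α (σ ⟨k - p + D - 1, by omega⟩) < α i then 1 else 0)
    -- the convex coefficients `λ_k`:
    (l : ℕ → ℝ)
    (hl0 : l 0 = ε2 / 2)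
    (hlmid : ∀ k, 1 ≤ k → k ≤ p - 1 → l k = ε2)
    (hlp : l p = α (σ ⟨D, by omega⟩) - ((p : ℝ) - 1 / 2) * ε2)
    (hlh : ∀ (h : ℕ) (_hh1 : p < h) (_hh2 : h < p + (N - D)),
      l h = α (σ ⟨h - p + D, by omega⟩) - α (σ ⟨h - p + D - 1, by omega⟩))
    (hltop : l (p + (N - D)) = 1 - α (σ ⟨N - 1, by omega⟩)) :
    (∀ k ≤ p + (N - D), 0 ≤ l k) ∧
    (∑ k ∈ Finset.range (p + (N - D) + 1), l k = 1) ∧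
    (∀ i, αt i = ∑ k ∈ Finset.range (p + (N - D) + 1), l k * pk k i) := by
  have hN : 0 < N := by omega
  set f := sortedWeight hN α σ
  have hf : Monotone f := sortedWeight_monotone hN hσ
  have hfα : ∀ j : Fin N, α (σ j) = f j := fun j => (sortedWeight_of_lt hN α σ j.isLt).symm
  have hp0 : 0 < p := hp ▸ Nat.ceil_pos.mpr (div_pos hαDpos hε2)
  rw [hfα] at hαD hgrid hlp hltop
  have hpD : ((p : ℝ) - 1) * ε2 < αD := by
    have := Nat.ceil_lt_add_one (div_pos hαDpos hε2).le
    rw [← hp] at this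
    exact (lt_div_iff₀ hε2).mp (by linarith)
  rw [hαD] at hpD hαt
  refine convex_decomposition_of_staircase (L := cumulativeWeight ε2 f p D (N - D))
    (fun k hk => coeff_eq_cumulativeWeight_sub hp0 (by omega) hD hl0 hlmid hlp
      (fun h h1 h2 => by simpa only [hfα] using hlh h h1 h2)
      (by rwa [Nat.add_sub_cancel' hDN.le]) hk)
    (cumulativeWeight_monotone hε2 hp0 (by omega) hf (fun _ => (hα _).2) hgrid)
    cumulativeWeight_zero cumulativeWeight_top fun i => ?_
  obtain ⟨j, rfl⟩ := σ.surjective i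
  have hj := hαt (σ j)
  rw [hfα] at hj
  exact exists_staircase hε2 hf hp0 hD (by omega) hpD hj.1 hj.2 (hpk_lo · · j)
    fun k hk1 hk2 => by simpa only [hfα] using hpk_hi k hk1 hk2 (σ j)
end
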